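/- Let Ω ⊆ ℂ be a domain with nonempty boundary and diam(Ω) > 0. Suppose Ω satisfies condition (Δ)_{1,α} for some α > 1: there exist constants ε ∈ (0,1), C > 0 and r₀ > 0 such that for every a ∈ ∂Ω, every r ∈ (0, r₀), every u ∈ F_{a,r}, and every z ∈ Ω with |z − a| = C·r^α, one has u(z) ≤ 1 − ε. Then there exists α′ > α such that ∂Ω satisfies condition (U)_{1,α′}. -/

import Mathlib

open Metric Set

/-- A real function is harmonic on an open set `s ⊆ ℂ` iff it is continuous on
`s` and satisfies the circle mean-value property on every closed disc
contained in `s`. -/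
def HarmonicOn (u : ℂ → ℝ) (s : Set ℂ) : Prop :=
  ContinuousOn u s ∧ ∀ c : ℂ, ∀ ρ : ℝ, 0 < ρ → closedBall c ρ ⊆ s →
    u c = (1 / (2 * Real.pi)) *
      ∫ θ in (0 : ℝ)..(2 * Real.pi), u (c + ρ * Complex.exp (θ * Complex.I))

/-- The family `F_{a,r}` of competitors for the harmonic measure of
`∂D(a,r) ∩ Ω` in `Ω ∩ D(a,r)`. -/
def MemF (Ω : Set ℂ) (a : ℂ) (r : ℝ) (u : ℂ → ℝ) : Prop :=
  HarmonicOn u (Ω ∩ ball a r) ∧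
  (∀ z ∈ Ω ∩ ball a r, u z ≤ 1) ∧
  (∀ ζ ∈ frontier Ω ∩ ball a r,
    Filter.limsup u (nhdsWithin ζ (Ω ∩ ball a r)) ≤ 0)

/-- A set `E ⊆ ℂ` satisfies condition `(U)_{1,α}`. -/
def CondU1 (E : Set ℂ) (α : ℝ) : Prop :=
  ∃ C > (0 : ℝ), ∃ r₀ > (0 : ℝ), ∀ a ∈ E, ∀ r ∈ Set.Ioo (0 : ℝ) r₀,
    ({z : ℂ | C * r ^ α ≤ dist z a ∧ dist z a ≤ r} ∩ E).Nonempty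

/-!
If the annulus `C' r^α' ≤ |z - a| ≤ r` missed `∂Ω`, then with `ρ = C' r^α'` the function
`u = log (|z - a| / ρ) / log (r / ρ)` would belong to `F_{a,r}`: it is harmonic off `a`, at most `1`
on `D(a,r)`, and nonpositive near the points of `∂Ω ∩ D(a,r)`, which all lie in `D(a,ρ)`.
Since `Ω` is connected and has points both near `a` and far from it, it meets the circle
`|z - a| = C r^α`, where `u > 1 - ε` as soon as `ρ^ε r^(1-ε) < C r^α`; the choice
`α' = (α - 1 + ε) / ε`, `C' = C^(1/ε) / 2` guarantees this, contradicting `(Δ)_{1,α}`.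
-/

open Filter Topology InnerProductSpace Real

theorem InnerProductSpace.HarmonicOnNhd.harmonicOn {u : ℂ → ℝ} {s : Set ℂ}
    (hu : HarmonicOnNhd u s) : HarmonicOn u s := by
  refine ⟨hu.continuousOn, fun c ρ hρ hsub => ?_⟩
  have hmean := (hu.mono (by rwa [abs_of_pos hρ])).circleAverage_eq (c := c) (R := ρ)
  rw [← hmean, circleAverage_def, smul_eq_mul, one_div]
  rfl

theorem harmonicOnNhd_log_dist_sub_div (a : ℂ) (K L : ℝ) :
    HarmonicOnNhd (fun z => (log (dist z a) - K) / L) {a}ᶜ := by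
  intro z hz
  have hlog : HarmonicAt (fun z => log ‖z - a‖) z :=
    (analyticAt_id.sub analyticAt_const).harmonicAt_log_norm (sub_ne_zero.mpr hz)
  have := (hlog.sub (harmonicAt_const K)).const_smul (c := L⁻¹)
  convert this using 1
  ext w
  simp [dist_eq_norm, div_eq_inv_mul]

theorem limsup_nonpos_of_eventually_nonpos {β : Type*} {f : Filter β} {u : β → ℝ}
    (h : ∀ᶠ x in f, u x ≤ 0) : limsup u f ≤ 0 := by
  rw [limsup_eq]
  by_cases hbdd : BddBelow {a | ∀ᶠ x in f, u x ≤ a}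
  · exact csInf_le hbdd h
  · -- in `ℝ`, the `sInf` of a set that is not bounded below is `0`
    rw [Real.sInf_of_not_bddBelow hbdd]

theorem IsPreconnected.exists_mem_dist_eq {X : Type*} [PseudoMetricSpace X] {s : Set X}
    (hs : IsPreconnected s) {a x y : X} {t : ℝ} (ha : a ∈ closure s) (ht : 0 < t)
    (hx : x ∈ s) (hy : y ∈ s) (hxy : 2 * t < dist x y) : ∃ z ∈ s, dist z a = t := by
  obtain ⟨b, hb, hab⟩ := Metric.mem_closure_iff.mp ha t ht
  obtain ⟨w, hw, hwt⟩ : ∃ w ∈ s, t ≤ dist w a := by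
    by_contra! hnear
    linarith [dist_triangle_right x y a, hnear x hx, hnear y hy]
  rw [dist_comm] at hab
  exact hs.intermediate_value hb hw (continuous_id.dist continuous_const).continuousOn
    ⟨hab.le, hwt⟩

theorem eventually_mul_rpow_lt_mul_rpow {A B p q : ℝ} (hA : 0 < A) (hpq : p < q) :
    ∀ᶠ r in 𝓝[>] 0, B * r ^ q < A * r ^ p := by
  have hlim : Tendsto (fun r : ℝ => B * r ^ (q - p)) (𝓝[>] 0) (𝓝 0) := by
    have := ((continuous_rpow_const (sub_pos.mpr hpq).le).tendsto 0).const_mul B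
    rw [zero_rpow (sub_pos.mpr hpq).ne', mul_zero] at this
    exact this.mono_left nhdsWithin_le_nhds
  filter_upwards [hlim.eventually_lt_const hA, self_mem_nhdsWithin] with r hr hr0
  have hsplit : r ^ q = r ^ (q - p) * r ^ p := by
    rw [← rpow_add hr0, sub_add_cancel]
  rw [hsplit, ← mul_assoc]
  exact mul_lt_mul_of_pos_right hr (rpow_pos_of_pos hr0 p)

/-- The harmonic measure of the outer circle `|z - a| = r` in the annulus `ρ < |z - a| < r`. -/
noncomputable def annulusHarmonicMeasure (a : ℂ) (ρ r : ℝ) (z : ℂ) : ℝ :=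
  (log (dist z a) - log ρ) / (log r - log ρ)

section annulusHarmonicMeasure

variable {a z : ℂ} {ρ r : ℝ}

theorem annulusHarmonicMeasure_le_one (hρ : 0 < ρ) (hρr : ρ < r) (hz : z ≠ a)
    (hzr : dist z a ≤ r) : annulusHarmonicMeasure a ρ r z ≤ 1 := by
  rw [annulusHarmonicMeasure, div_le_one (sub_pos.mpr (log_lt_log hρ hρr))]
  linarith [log_le_log (dist_pos.mpr hz) hzr]

theorem annulusHarmonicMeasure_nonpos (hρ : 0 < ρ) (hρr : ρ < r) (hz : z ≠ a)
    (hzρ : dist z a ≤ ρ) : annulusHarmonicMeasure a ρ r z ≤ 0 :=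
  div_nonpos_of_nonpos_of_nonneg (sub_nonpos.mpr (log_le_log (dist_pos.mpr hz) hzρ))
    (sub_pos.mpr (log_lt_log hρ hρr)).le

theorem one_sub_lt_annulusHarmonicMeasure {ε : ℝ} (hρ : 0 < ρ) (hρr : ρ < r)
    (h : ε * log ρ + (1 - ε) * log r < log (dist z a)) :
    1 - ε < annulusHarmonicMeasure a ρ r z := by
  rw [annulusHarmonicMeasure, lt_div_iff₀ (sub_pos.mpr (log_lt_log hρ hρr))]
  linarith

theorem memF_annulusHarmonicMeasure {Ω : Set ℂ} (haΩ : a ∉ Ω) (hρ : 0 < ρ) (hρr : ρ < r)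
    (hgap : frontier Ω ∩ ball a r ⊆ ball a ρ) : MemF Ω a r (annulusHarmonicMeasure a ρ r) := by
  have hne : ∀ z ∈ Ω ∩ ball a r, z ≠ a := fun z hz => ne_of_mem_of_not_mem hz.1 haΩ
  refine ⟨((harmonicOnNhd_log_dist_sub_div a _ _).mono hne).harmonicOn,
    fun z hz => annulusHarmonicMeasure_le_one hρ hρr (hne z hz) (mem_ball.mp hz.2).le,
    fun ζ hζ => limsup_nonpos_of_eventually_nonpos ?_⟩
  filter_upwards [nhdsWithin_le_nhds (isOpen_ball.mem_nhds (hgap hζ)), self_mem_nhdsWithin]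
    with z hzρ hz
  exact annulusHarmonicMeasure_nonpos hρ hρr (hne z hz) (mem_ball.mp hzρ).le

end annulusHarmonicMeasure

theorem frontier_inter_annulus_nonempty {Ω : Set ℂ} (hopen : IsOpen Ω) (hconn : IsPreconnected Ω)
    {a x y : ℂ} {ρ t r ε : ℝ} (ha : a ∈ frontier Ω) (hx : x ∈ Ω) (hy : y ∈ Ω) (hρ : 0 < ρ)
    (hρr : ρ < r) (ht : 0 < t) (hfar : 2 * t < dist x y)
    (hlog : ε * log ρ + (1 - ε) * log r < log t)
    (hΔ : ∀ u, MemF Ω a r u → ∀ z ∈ Ω, dist z a = t → u z ≤ 1 - ε) :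
    ({z | ρ ≤ dist z a ∧ dist z a ≤ r} ∩ frontier Ω).Nonempty := by
  by_contra hempty
  have hgap : frontier Ω ∩ ball a r ⊆ ball a ρ := by
    rintro ζ ⟨hζ, hζr⟩
    by_contra hζρ
    exact hempty ⟨ζ, ⟨not_lt.mp hζρ, (mem_ball.mp hζr).le⟩, hζ⟩
  rw [hopen.frontier_eq] at ha
  obtain ⟨z, hz, hzt⟩ := hconn.exists_mem_dist_eq ha.1 ht hx hy hfar
  exact (hΔ _ (memF_annulusHarmonicMeasure ha.2 hρ hρr hgap) z hz hzt).not_gt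
    (one_sub_lt_annulusHarmonicMeasure hρ hρr (hzt ▸ hlog))

theorem mul_log_add_one_sub_mul_log_lt_log {α ε C r : ℝ} (hε : 0 < ε) (hC : 0 < C) (hr : 0 < r) :
    ε * log (C ^ (1 / ε) / 2 * r ^ ((α - 1 + ε) / ε)) + (1 - ε) * log r < log (C * r ^ α) := by
  rw [log_mul (by positivity) (by positivity), log_div (by positivity) two_ne_zero,
    log_rpow hC, log_rpow hr, log_mul hC.ne' (by positivity), log_rpow hr]
  have hlog2 := mul_pos hε (log_pos one_lt_two)
  field_simp
  linarith

theorem stmt_11_general (Ω : Set ℂ) (hopen : IsOpen Ω) (hconn : IsConnected Ω)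
    (hdiam : 0 < EMetric.diam Ω)
    (α ε C r₀ : ℝ) (hα : 1 < α) (hε : ε ∈ Set.Ioo (0 : ℝ) 1)
    (hC : 0 < C) (hr₀ : 0 < r₀)
    (hΔ : ∀ a ∈ frontier Ω, ∀ r ∈ Set.Ioo (0 : ℝ) r₀, ∀ u : ℂ → ℝ,
      MemF Ω a r u → ∀ z ∈ Ω, dist z a = C * r ^ α → u z ≤ 1 - ε) :
    ∃ α' > α, CondU1 (frontier Ω) α' := by
  obtain ⟨hε0, hε1⟩ := hε
  obtain ⟨x, hx, y, hy, hxy⟩ := ediam_pos_iff'.mp hdiam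
  set α' := (α - 1 + ε) / ε
  set C' := C ^ (1 / ε) / 2
  have hαα' : α < α' := by
    rw [lt_div_iff₀ hε0]
    nlinarith
  have hsmall : ∀ᶠ r in 𝓝[>] 0, r < r₀ ∧ C' * r ^ α' < 1 * r ^ (1 : ℝ) ∧
      2 * C * r ^ α < dist x y * r ^ (0 : ℝ) :=
    ((eventually_lt_nhds hr₀).filter_mono nhdsWithin_le_nhds).and
      ((eventually_mul_rpow_lt_mul_rpow one_pos (by linarith)).and
        (eventually_mul_rpow_lt_mul_rpow (dist_pos.mpr hxy) (by linarith)))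
  obtain ⟨r₁, hr₁, hsub⟩ := mem_nhdsGT_iff_exists_Ioo_subset.mp hsmall
  refine ⟨α', hαα', C', by positivity, r₁, hr₁, fun a ha r hr => ?_⟩
  obtain ⟨hrr₀, hρr, hfar⟩ := hsub hr
  rw [one_mul, rpow_one] at hρr
  rw [rpow_zero, mul_one, mul_assoc] at hfar
  have hr0 := hr.1
  exact frontier_inter_annulus_nonempty hopen hconn.isPreconnected ha hx hy (by positivity) hρr
    (by positivity) hfar (mul_log_add_one_sub_mul_log_lt_log hε0 hC hr0)
    (hΔ a ha r ⟨hr0, hrr₀⟩)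

/-- If `Ω` satisfies `(Δ)_{1,α}` for some `α > 1`, then `∂Ω` satisfies
`(U)_{1,α′}` for some `α′ > α`. -/
theorem stmt_11 (Ω : Set ℂ) (hopen : IsOpen Ω) (hconn : IsConnected Ω)
    (hbd : (frontier Ω).Nonempty) (hdiam : 0 < EMetric.diam Ω)
    (α ε C r₀ : ℝ) (hα : 1 < α) (hε : ε ∈ Set.Ioo (0 : ℝ) 1)
    (hC : 0 < C) (hr₀ : 0 < r₀)
    (hΔ : ∀ a ∈ frontier Ω, ∀ r ∈ Set.Ioo (0 : ℝ) r₀, ∀ u : ℂ → ℝ,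
      MemF Ω a r u → ∀ z ∈ Ω, dist z a = C * r ^ α → u z ≤ 1 - ε) :
    ∃ α' > α, CondU1 (frontier Ω) α' :=
  stmt_11_general Ω hopen hconn hdiam α ε C r₀ hα hε hC hr₀ hΔ
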